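/- arXiv:1911.06661 — 4 statements merged into one kernel-verified Lean document; each statement's English description precedes it below -/
import Mathlib

section
/- Let g ≥ 1, let e : Fin (g+1) → ℝ be a sequence of positive reals with e g = 1, let β' : Fin (g+2) → ℝ, and define β̄ : Fin (g+2) → ℝ by β̄ 0 = e 0 and β̄ (j+1) = e j * (β' (j+1) − 1) + n j * β̄ j for 0 ≤ j ≤ g, where n 0 = 1 and n j = e (j−1) / e j for j ≥ 1. Then β̄ (g+1) = (∑_{j=1}^{g} (e j)^2 * (β' (j+1) − 1)) + β̄ 0 * β̄ 1. -/
/-- Lemma 4.3: the last maximal contact value in terms of the Puiseux exponents. -/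
theorem last_maximal_contact_value
    (g : ℕ) (hg : 1 ≤ g) (e bp bb n : ℕ → ℝ)
    (he : ∀ j ≤ g, 0 < e j) (heg : e g = 1)
    (hn0 : n 0 = 1) (hn : ∀ j, 1 ≤ j → j ≤ g → n j = e (j - 1) / e j)
    (hb0 : bb 0 = e 0)
    (hrec : ∀ j ≤ g, bb (j + 1) = e j * (bp (j + 1) - 1) + n j * bb j) :
    bb (g + 1) = (∑ j ∈ Finset.Icc 1 g, (e j) ^ 2 * (bp (j + 1) - 1)) + bb 0 * bb 1 := by
  have key : ∀ j ≤ g, e j * bb (j + 1) =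
      (∑ k ∈ Finset.Icc 1 j, (e k) ^ 2 * (bp (k + 1) - 1)) + bb 0 * bb 1 := by
    intro j hj
    induction j with
    | zero => simp [hb0]
    | succ j ih =>
      have hj' : j ≤ g := Nat.le_of_succ_le hj
      have hne : e (j + 1) ≠ 0 := (he (j + 1) hj).ne'
      have h1 : e (j + 1) * bb (j + 1 + 1)
          = e (j + 1) ^ 2 * (bp (j + 1 + 1) - 1) + e j * bb (j + 1) := by
        rw [hrec (j + 1) hj, hn (j + 1) (by omega) hj]
        simp only [Nat.add_sub_cancel]
        field_simp
      rw [h1, ih hj', Finset.sum_Icc_succ_top (by omega : 1 ≤ j + 1)]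
      ring
  calc bb (g + 1) = e g * bb (g + 1) := by rw [heg]; ring
    _ = _ := key g le_rfl
end

section
/- Let g ≥ 1, let e : Fin (g+1) → ℝ be positive reals with e g = 1, β' : Fin (g+2) → ℝ, and β̄ defined by β̄ 0 = e 0 and β̄ (j+1) = e j * (β' (j+1) − 1) + n j * β̄ j (n 0 = 1, n j = e (j−1)/e j). Set w j = e j / e 0. Assume β' 1 = β̄ 1 / β̄ 0. Then β̄ 1 ^ 2 ≥ β̄ (g+1) if and only if β' 1 * (β' 1 − 1) ≥ ∑_{j=1}^{g} (w j)^2 * (β' (j+1) − 1). -/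
/-- Equivalence underlying Theorem 4.5(a). -/
theorem npi_projective_criterion
    (g : ℕ) (hg : 1 ≤ g) (e bp bb n w : ℕ → ℝ)
    (he : ∀ j ≤ g, 0 < e j) (heg : e g = 1)
    (hn0 : n 0 = 1) (hn : ∀ j, 1 ≤ j → j ≤ g → n j = e (j - 1) / e j)
    (hw : ∀ j ≤ g, w j = e j / e 0)
    (hb0 : bb 0 = e 0)
    (hrec : ∀ j ≤ g, bb (j + 1) = e j * (bp (j + 1) - 1) + n j * bb j)
    (hbp1 : bp 1 = bb 1 / bb 0) :
    bb 1 ^ 2 ≥ bb (g + 1) ↔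
      bp 1 * (bp 1 - 1) ≥ ∑ j ∈ Finset.Icc 1 g, (w j) ^ 2 * (bp (j + 1) - 1) := by
  have he0 : 0 < e 0 := he 0 (Nat.zero_le g)
  have hb1 : bb 1 = e 0 * bp 1 := by
    have := hrec 0 (Nat.zero_le g)
    rw [hn0, hb0] at this
    rw [this]; ring
  -- telescoped formula
  have key : ∀ m, m ≤ g →
      e m * bb (m + 1) = e 0 ^ 2 * bp 1 +
        ∑ j ∈ Finset.Icc 1 m, e j ^ 2 * (bp (j + 1) - 1) := by
    intro m
    induction m with
    | zero =>
      intro _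
      simp [hb1]; ring
    | succ m ih =>
      intro hm
      have hm' : m ≤ g := Nat.le_of_succ_le hm
      have h1 : 1 ≤ m + 1 := Nat.succ_le_succ (Nat.zero_le m)
      have hrec' := hrec (m + 1) hm
      have hn' := hn (m + 1) h1 hm
      simp only [Nat.add_sub_cancel] at hn'
      have hem1 : e (m + 1) ≠ 0 := ne_of_gt (he (m + 1) hm)
      have : e (m + 1) * bb (m + 2) =
          e (m + 1) ^ 2 * (bp (m + 2) - 1) + e m * bb (m + 1) := by
        rw [hrec', hn']
        field_simp
      rw [this, ih hm', Finset.sum_Icc_succ_top h1]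
      ring
  have hbbg : bb (g + 1) = e 0 ^ 2 * bp 1 +
      ∑ j ∈ Finset.Icc 1 g, e j ^ 2 * (bp (j + 1) - 1) := by
    have := key g le_rfl
    rwa [heg, one_mul] at this
  have hwsum : ∑ j ∈ Finset.Icc 1 g, (w j) ^ 2 * (bp (j + 1) - 1)
      = (∑ j ∈ Finset.Icc 1 g, e j ^ 2 * (bp (j + 1) - 1)) / e 0 ^ 2 := by
    rw [Finset.sum_div]
    apply Finset.sum_congr rfl
    intro j hj
    rw [hw j (Finset.mem_Icc.mp hj).2]
    field_simp
  set S := ∑ j ∈ Finset.Icc 1 g, e j ^ 2 * (bp (j + 1) - 1) with hS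
  rw [hbbg, hwsum, hb1]
  have he0sq : (0:ℝ) < e 0 ^ 2 := by positivity
  rw [ge_iff_le, ge_iff_le, div_le_iff₀ he0sq]
  constructor <;> intro h <;> nlinarith [h]
end

section
/- With the same setup (e positive with e g = 1, β̄ 0 = e 0, β̄ (j+1) = e j (β' (j+1) − 1) + n j β̄ j, w j = e j / e 0, β' 1 = β̄ 1 / β̄ 0) and for any real δ ≥ 1: 2 * β̄ 0 * β̄ 1 − δ * β̄ 0 ^ 2 ≥ β̄ (g+1) if and only if β' 1 − δ ≥ ∑_{j=1}^{g} (w j)^2 * (β' (j+1) − 1). -/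
/-!
Multiplying the recurrence for `β̄ (j+1)` by `e j` and using `n j = e (j-1) / e j` gives
`e j * β̄ (j+1) = e j ^ 2 * (β' (j+1) - 1) + e (j-1) * β̄ j`, which telescopes (with `e g = 1`) to
`β̄ (g+1) = ∑_{j=1}^{g} e j ^ 2 * (β' (j+1) - 1) + e 0 * β̄ 1`.
Since `w j = e j / e 0` and `β' 1 = β̄ 1 / e 0`, both sides of the equivalence become the same
inequality once the right-hand one is multiplied by `e 0 ^ 2`.
-/

open Finset

theorem mul_succ_eq_sum_sq_mul_add {e c b : ℕ → ℝ} (m : ℕ)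
    (he : ∀ j, 1 ≤ j → j ≤ m → e j ≠ 0)
    (hrec : ∀ j, 1 ≤ j → j ≤ m → b (j + 1) = e j * c j + e (j - 1) / e j * b j) :
    e m * b (m + 1) = ∑ j ∈ Icc 1 m, e j ^ 2 * c j + e 0 * b 1 := by
  induction m with
  | zero => simp
  | succ m ih =>
    have ih := ih (fun j h1 _ => he j h1 (by omega)) (fun j h1 _ => hrec j h1 (by omega))
    have hem : e (m + 1) ≠ 0 := he (m + 1) (by omega) le_rfl
    have step : e (m + 1) * b (m + 2) = e (m + 1) ^ 2 * c (m + 1) + e m * b (m + 1) := by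
      rw [hrec (m + 1) (by omega) le_rfl, Nat.add_sub_cancel]
      field_simp
    rw [sum_Icc_succ_top (by omega), step, ih]
    ring

theorem sum_div_sq_mul_eq {e w c : ℕ → ℝ} (g : ℕ) (hw : ∀ j ≤ g, w j = e j / e 0) :
    ∑ j ∈ Icc 1 g, w j ^ 2 * c j = (∑ j ∈ Icc 1 g, e j ^ 2 * c j) / e 0 ^ 2 := by
  rw [sum_div]
  refine sum_congr rfl fun j hj => ?_
  rw [hw j (mem_Icc.mp hj).2]
  ring

theorem npi_nonspecial_criterion_general
    (g : ℕ) (e bp bb n w : ℕ → ℝ) (δ : ℝ)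
    (he : ∀ j ≤ g, 0 < e j) (heg : e g = 1)
    (hn : ∀ j, 1 ≤ j → j ≤ g → n j = e (j - 1) / e j)
    (hw : ∀ j ≤ g, w j = e j / e 0)
    (hb0 : bb 0 = e 0)
    (hrec : ∀ j ≤ g, bb (j + 1) = e j * (bp (j + 1) - 1) + n j * bb j)
    (hbp1 : bp 1 = bb 1 / bb 0) :
    2 * bb 0 * bb 1 - δ * bb 0 ^ 2 ≥ bb (g + 1) ↔
      bp 1 - δ ≥ ∑ j ∈ Finset.Icc 1 g, (w j) ^ 2 * (bp (j + 1) - 1) := by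
  have he0 : 0 < e 0 := he 0 (Nat.zero_le g)
  have hlast := mul_succ_eq_sum_sq_mul_add (b := bb) (c := fun j => bp (j + 1) - 1) g
    (fun j _ hj => (he j hj).ne') (fun j h1 hj => by rw [hrec j hj, hn j h1 hj])
  rw [heg, one_mul] at hlast
  have hbp1_mul : bb 1 / e 0 * e 0 ^ 2 = e 0 * bb 1 := by field_simp
  rw [hlast, sum_div_sq_mul_eq g hw, hbp1, hb0, ge_iff_le, ge_iff_le,
    div_le_iff₀ (by positivity), sub_mul, hbp1_mul]
  constructor <;> intro h <;> linarith

/-- Equivalence underlying Theorem 4.5(c). -/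
theorem npi_nonspecial_criterion
    (g : ℕ) (hg : 1 ≤ g) (e bp bb n w : ℕ → ℝ) (δ : ℝ) (hδ : 1 ≤ δ)
    (he : ∀ j ≤ g, 0 < e j) (heg : e g = 1)
    (hn0 : n 0 = 1) (hn : ∀ j, 1 ≤ j → j ≤ g → n j = e (j - 1) / e j)
    (hw : ∀ j ≤ g, w j = e j / e 0)
    (hb0 : bb 0 = e 0)
    (hrec : ∀ j ≤ g, bb (j + 1) = e j * (bp (j + 1) - 1) + n j * bb j)
    (hbp1 : bp 1 = bb 1 / bb 0) :
    2 * bb 0 * bb 1 - δ * bb 0 ^ 2 ≥ bb (g + 1) ↔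
      bp 1 - δ ≥ ∑ j ∈ Finset.Icc 1 g, (w j) ^ 2 * (bp (j + 1) - 1) :=
  npi_nonspecial_criterion_general g e bp bb n w δ he heg hn hw hb0 hrec hbp1
end

section
/- In the setting of the previous statement (p j ≥ 2, q j > p j coprime, e j = ∏_{k=j+1}^g p k, β̄ defined by the recurrence β̄ 0 = e 0, β̄ (j+1) = e j(β'_{j+1} − 1) + p j β̄ j with β'_j = q j / p j), for every 0 ≤ j ≤ g one has gcd(β̄ 0, β̄ 1, …, β̄ j) = e j, where the β̄'s are regarded as positive integers. -/
/-- The gcd identity e_j = gcd(β̄_0, …, β̄_j) for maximal contact values. -/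
theorem gcd_of_maximal_contact_values
    (g : ℕ) (hg : 1 ≤ g) (p q : ℕ → ℕ)
    (hp : ∀ j, 1 ≤ j → j ≤ g → 2 ≤ p j)
    (hq : ∀ j, 1 ≤ j → j ≤ g → p j < q j)
    (hcop : ∀ j, 1 ≤ j → j ≤ g → Nat.gcd (p j) (q j) = 1)
    (e : ℕ → ℚ) (he : ∀ j ≤ g, e j = ∏ k ∈ Finset.Icc (j + 1) g, (p k : ℚ))
    (bp : ℕ → ℚ) (hbp : ∀ j, 1 ≤ j → j ≤ g → bp j = (q j : ℚ) / (p j : ℚ))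
    (bb : ℕ → ℚ) (hb0 : bb 0 = e 0)
    (hrec0 : bb 1 = e 0 * (bp 1 - 1) + bb 0)
    (hrec : ∀ j, 1 ≤ j → j ≤ g → bb (j + 1) = e j * (bp (j + 1) - 1) + (p j : ℚ) * bb j)
    (b : ℕ → ℕ) (hb : ∀ j ≤ g, 0 < b j ∧ bb j = (b j : ℚ)) :
    ∀ j ≤ g, (((Finset.Icc 0 j).gcd b : ℕ) : ℚ) = e j := by
  set E : ℕ → ℕ := fun j => ∏ k ∈ Finset.Icc (j + 1) g, p k with hE
  have hEcast : ∀ j ≤ g, e j = (E j : ℚ) := by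
    intro j hj
    rw [he j hj, hE]
    push_cast
    rfl
  have hEsplit : ∀ j, j < g → E j = p (j + 1) * E (j + 1) := by
    intro j hj
    have h1 : Finset.Icc (j + 1) g = Finset.Ico (j + 1) (g + 1) := by
      rw [Finset.Ico_add_one_right_eq_Icc]
    have h2 : Finset.Icc (j + 2) g = Finset.Ico (j + 2) (g + 1) := by
      rw [Finset.Ico_add_one_right_eq_Icc]
    simp only [hE, h1, h2]
    rw [Finset.prod_eq_prod_Ico_succ_bot (by omega : j + 1 < g + 1)]
  have hpne : ∀ j, 1 ≤ j → j ≤ g → ((p j : ℚ) ≠ 0) := by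
    intro j h1 h2
    have := hp j h1 h2
    exact Nat.cast_ne_zero.mpr (by omega)
  -- main induction
  have key : ∀ j, 1 ≤ j → j ≤ g →
      (Finset.Icc 0 j).gcd b = E j ∧ ∃ m, b j = E j * m ∧ Nat.Coprime (p j) m := by
    intro j hj1
    induction j, hj1 using Nat.le_induction with
    | base =>
      intro h1g
      -- b 0 = E 0
      have hb0' : b 0 = E 0 := by
        have h := (hb 0 (by omega)).2
        have : ((b 0 : ℚ)) = (E 0 : ℚ) := by rw [← h, hb0, hEcast 0 (by omega)]
        exact_mod_cast this
      have hE0 : E 0 = p 1 * E 1 := hEsplit 0 (by omega)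
      have hp1 : (p 1 : ℚ) ≠ 0 := hpne 1 le_rfl h1g
      -- b 1 = E 1 * q 1
      have hb1 : b 1 = E 1 * q 1 := by
        have h := (hb 1 h1g).2
        have hc : ((b 1 : ℚ)) = ((E 1 * q 1 : ℕ) : ℚ) := by
          rw [← h, hrec0, hbp 1 le_rfl h1g, hb0, hEcast 0 (by omega)]
          push_cast [hE0]
          field_simp
          ring
        exact_mod_cast hc
      constructor
      · have hIcc : Finset.Icc 0 1 = ({0, 1} : Finset ℕ) := rfl
        rw [hIcc]
        simp only [Finset.gcd_insert, Finset.gcd_singleton]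
        have hng : ∀ a c : ℕ, GCDMonoid.gcd a c = Nat.gcd a c := fun _ _ => rfl
        have hnorm : ∀ a : ℕ, normalize a = a := fun _ => normalize_eq _
        rw [hnorm, hng, hb0', hb1, hE0, mul_comm (p 1) (E 1), Nat.gcd_mul_left,
          hcop 1 le_rfl h1g, mul_one]
      · exact ⟨q 1, hb1, hcop 1 le_rfl h1g⟩
    | succ j hj ih =>
      intro hjg
      have hjg' : j ≤ g := by omega
      have hjlt : j < g := by omega
      obtain ⟨hgcd, m, hbm, hcopm⟩ := ih hjg'
      have hsplit : E j = p (j + 1) * E (j + 1) := hEsplit j hjlt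
      have h1 : 1 ≤ j + 1 := by omega
      have hqp : p (j + 1) < q (j + 1) := hq (j + 1) h1 hjg
      have hpj1 : (p (j + 1) : ℚ) ≠ 0 := hpne (j + 1) h1 hjg
      set m' : ℕ := (q (j + 1) - p (j + 1)) + p (j + 1) * (p j * m) with hm'
      have hbj1 : b (j + 1) = E (j + 1) * m' := by
        have h := (hb (j + 1) hjg).2
        have hbj := (hb j hjg').2
        have hc : ((b (j + 1) : ℚ)) = ((E (j + 1) * m' : ℕ) : ℚ) := by
          rw [← h, hrec j hj hjg', hbp (j + 1) h1 hjg, hEcast j hjg', hbj, hbm,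
            hsplit, hm']
          push_cast [Nat.cast_sub hqp.le]
          field_simp
        exact_mod_cast hc
      have hcopm' : Nat.Coprime (p (j + 1)) m' := by
        have e1 : Nat.gcd (p (j + 1)) m' = Nat.gcd (p (j + 1)) (q (j + 1) - p (j + 1)) := by
          rw [hm', Nat.gcd_add_mul_left_right]
        have e2 : Nat.gcd (p (j + 1)) (q (j + 1) - p (j + 1))
            = Nat.gcd (p (j + 1)) (q (j + 1)) := by
          conv_rhs => rw [show q (j + 1) = (q (j + 1) - p (j + 1)) + p (j + 1) * 1 by omega]
          rw [Nat.gcd_add_mul_left_right]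
        unfold Nat.Coprime
        rw [e1, e2, hcop (j + 1) h1 hjg]
      refine ⟨?_, m', hbj1, hcopm'⟩
      have hIcc : Finset.Icc 0 (j + 1) = insert (j + 1) (Finset.Icc 0 j) := by
        exact (Finset.insert_Icc_right_eq_Icc_add_one (by omega)).symm
      rw [hIcc, Finset.gcd_insert, hgcd, hbj1, hsplit]
      have hng : ∀ a c : ℕ, GCDMonoid.gcd a c = Nat.gcd a c := fun _ _ => rfl
      have hg1 : Nat.gcd m' (p (j + 1)) = 1 := Nat.Coprime.gcd_eq_one hcopm'.symm
      rw [hng, mul_comm (p (j + 1)) (E (j + 1)), Nat.gcd_mul_left, hg1, mul_one]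
  intro j hjg
  rcases Nat.eq_zero_or_pos j with h0 | hpos
  · subst h0
    have hb0' : b 0 = E 0 := by
      have h := (hb 0 (by omega)).2
      have : ((b 0 : ℚ)) = (E 0 : ℚ) := by rw [← h, hb0, hEcast 0 (by omega)]
      exact_mod_cast this
    simp [Finset.Icc_self, hb0', hEcast 0 (by omega)]
  · rw [(key j hpos hjg).1, hEcast j hjg]
end
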